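/- arXiv:1911.03148 — 5 statements merged into one kernel-verified Lean document; each statement's English description precedes it below -/
import Mathlib

section
/- Let G(t,x) = 1/2 if t > 0 and |x| < t, and G(t,x) = 0 otherwise (t ∈ ℝ, x ∈ ℝ). Fix T > 0. Then there exists a constant C(T) > 0 such that for all t, t̄ ∈ [0,T] and all x, x̄ ∈ ℝ: ∫₀^T ∫_ℝ |G(t−s, x−y) − G(t̄−s, x̄−y)| dy ds = 2 ∫₀^T ∫_ℝ |G(t−s, x−y) − G(t̄−s, x̄−y)|² dy ds ≤ C(T)·(|t−t̄| + |x−x̄|). -/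
/-!
For fixed `s`, `y ↦ G1 (t - s) (x - y)` is half the indicator of the ball `ball x (t - s)`,
an open interval (empty when `t ≤ s`). Hence `|G1 (t - s) (x - y) - G1 (t' - s) (x' - y)|` is
half the indicator of the symmetric difference of two intervals, which is covered by the
segments joining their left endpoints and their right endpoints; its measure is therefore at most
`2 (|t - t'| + |x - x'|)`, and integrating over `s ∈ [0, T]` gives `C = T`. As the difference
only takes the values `0` and `±1/2`, its absolute value equals twice its square.
-/

open MeasureTheory

/-- The fundamental solution of the wave operator in spatial dimension 1,
extended by `0` for `t ≤ 0`. -/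
noncomputable def G1 (t x : ℝ) : ℝ := if 0 < t ∧ |x| < t then 1 / 2 else 0

open Set Metric
open scoped symmDiff

theorem integral_abs_indicator_sub_indicator {α : Type*} [MeasurableSpace α] {μ : Measure α}
    {s t : Set α} (hs : MeasurableSet s) (ht : MeasurableSet t) (c : ℝ) :
    ∫ x, |s.indicator (fun _ ↦ c) x - t.indicator (fun _ ↦ c) x| ∂μ =
      μ.real (s ∆ t) * |c| := by
  have h (x : α) : |s.indicator (fun _ ↦ c) x - t.indicator (fun _ ↦ c) x| =
      (s ∆ t).indicator (fun _ ↦ |c|) x := by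
    rw [← abs_indicator_symmDiff]
    by_cases hx : x ∈ s ∆ t <;> simp [hx]
  simp_rw [h, integral_indicator_const _ (hs.symmDiff ht), smul_eq_mul]

theorem Ioo_symmDiff_Ioo_subset {α : Type*} [LinearOrder α] (a b c d : α) :
    Ioo a b ∆ Ioo c d ⊆ uIcc a c ∪ uIcc b d := by
  intro y hy
  simp only [mem_symmDiff, mem_Ioo, mem_union, mem_uIcc, not_and_or, not_lt] at hy ⊢
  rcases hy with ⟨⟨hay, hyb⟩, hyc | hdy⟩ | ⟨⟨hcy, hyd⟩, hya | hby⟩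
  · exact Or.inl (Or.inl ⟨hay.le, hyc⟩)
  · exact Or.inr (Or.inr ⟨hdy, hyb.le⟩)
  · exact Or.inl (Or.inr ⟨hcy.le, hya⟩)
  · exact Or.inr (Or.inl ⟨hby, hyd.le⟩)

theorem volume_real_ball_symmDiff_ball_le (x r x' r' : ℝ) :
    volume.real (ball x r ∆ ball x' r') ≤ 2 * (|x - x'| + |r - r'|) := by
  rw [Real.ball_eq_Ioo, Real.ball_eq_Ioo]
  calc volume.real (Ioo (x - r) (x + r) ∆ Ioo (x' - r') (x' + r'))
      ≤ volume.real (uIcc (x - r) (x' - r') ∪ uIcc (x + r) (x' + r')) :=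
        measureReal_mono (Ioo_symmDiff_Ioo_subset _ _ _ _)
          (isCompact_uIcc.union isCompact_uIcc).measure_lt_top.ne
    _ ≤ volume.real (uIcc (x - r) (x' - r')) + volume.real (uIcc (x + r) (x' + r')) :=
        measureReal_union_le _ _
    _ = |(x' - r') - (x - r)| + |(x' + r') - (x + r)| := by
        simp [measureReal_def, Real.volume_interval]
    _ ≤ 2 * (|x - x'| + |r - r'|) := by
        rw [show x' - r' - (x - r) = (x' - x) + (r - r') by ring,
          show x' + r' - (x + r) = (x' - x) + (r' - r) by ring, abs_sub_comm x, abs_sub_comm r]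
        linarith [abs_add_le (x' - x) (r - r'), abs_add_le (x' - x) (r' - r), abs_sub_comm r' r]

theorem G1_sub_eq_indicator (r x y : ℝ) :
    G1 r (x - y) = (ball x r).indicator (fun _ ↦ 1 / 2) y := by
  have h : 0 < r ∧ |x - y| < r ↔ y ∈ ball x r := by
    rw [mem_ball, Real.dist_eq, abs_sub_comm, and_iff_right_of_imp (abs_nonneg _).trans_lt]
  classical
  simp only [G1, indicator_apply, h]

theorem integral_abs_G1_sub_G1_le (r x r' x' : ℝ) :
    ∫ y, |G1 r (x - y) - G1 r' (x' - y)| ≤ |x - x'| + |r - r'| := by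
  simp_rw [G1_sub_eq_indicator]
  rw [integral_abs_indicator_sub_indicator measurableSet_ball measurableSet_ball,
    abs_of_pos one_half_pos]
  linarith [volume_real_ball_symmDiff_ball_le x r x' r']

theorem two_mul_sq_abs_G1_sub_G1 (r x r' x' : ℝ) :
    2 * |G1 r x - G1 r' x'| ^ 2 = |G1 r x - G1 r' x'| := by
  unfold G1; split_ifs <;> norm_num

/-- `L¹`/`L²` estimates for space-time increments of the 1-d wave kernel. -/
theorem stmt2 (T : ℝ) (hT : 0 < T) :
    ∃ C > 0, ∀ t ∈ Set.Icc (0 : ℝ) T, ∀ t' ∈ Set.Icc (0 : ℝ) T, ∀ x x' : ℝ,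
      (∫ s in (0 : ℝ)..T, ∫ y : ℝ, |G1 (t - s) (x - y) - G1 (t' - s) (x' - y)|)
          = 2 * ∫ s in (0 : ℝ)..T, ∫ y : ℝ, |G1 (t - s) (x - y) - G1 (t' - s) (x' - y)| ^ 2
        ∧ (∫ s in (0 : ℝ)..T, ∫ y : ℝ, |G1 (t - s) (x - y) - G1 (t' - s) (x' - y)|)
          ≤ C * (|t - t'| + |x - x'|) := by
  refine ⟨T, hT, fun t _ t' _ x x' ↦ ⟨?_, ?_⟩⟩
  · rw [← intervalIntegral.integral_const_mul]
    refine intervalIntegral.integral_congr fun s _ ↦ ?_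
    simp only [← integral_const_mul, two_mul_sq_abs_G1_sub_G1]
  · have hbound : ∀ s ∈ uIoc (0 : ℝ) T,
        ‖∫ y, |G1 (t - s) (x - y) - G1 (t' - s) (x' - y)|‖ ≤ |t - t'| + |x - x'| := by
      intro s _
      rw [Real.norm_of_nonneg (integral_nonneg fun _ ↦ abs_nonneg _), add_comm]
      simpa only [sub_sub_sub_cancel_right] using integral_abs_G1_sub_G1_le (t - s) x (t' - s) x'
    calc _ ≤ _ := le_abs_self _
      _ ≤ (|t - t'| + |x - x'|) * |T - 0| :=
        intervalIntegral.norm_integral_le_of_norm_le_const hbound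
      _ = T * (|t - t'| + |x - x'|) := by rw [sub_zero, abs_of_pos hT, mul_comm]
end

section
/- Let d ∈ {2,3}, κ > d − 2, T > 0, and let ν > 0 satisfy ν < min(2, κ − d + 2). Then there exists a constant C = C(d,κ,T,ν) > 0 such that for every t ∈ (0,T]: ∫_{ℝ^d} (sin(t|ζ|)/|ζ|)² · (1 + |ζ|²)^{−κ/2} dζ ≤ C · t^ν. -/
/-! Since `|sin x| ≤ min 1 |x|`, one has `(sin (t r) / r)² ≤ tᵛ r^(ν-2)` for `0 ≤ ν ≤ 2`, so the
integral is at most `tᵛ ∫ ‖ζ‖^(ν-2) (1 + ‖ζ‖²)^(-κ/2) dζ`. In polar coordinates the latter is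
`∫₀^∞ r^(d-3+ν) (1 + r²)^(-κ/2) dr`, which converges at `0` because `d - 3 + ν > -1` and at `∞`
because `d - 3 + ν - κ < -1`. -/

open MeasureTheory Set Real Module

theorem Real.sin_sq_le_rpow {x ν : ℝ} (hx : 0 ≤ x) (hν0 : 0 ≤ ν) (hν2 : ν ≤ 2) :
    sin x ^ 2 ≤ x ^ ν := by
  rcases le_total x 1 with hx1 | hx1
  · calc sin x ^ 2 ≤ x ^ 2 := sin_sq_le_sq
      _ = x ^ (2 : ℝ) := (rpow_two x).symm
      _ ≤ x ^ ν := rpow_le_rpow_of_exponent_ge' hx hx1 hν0 hν2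
  · exact (sin_sq_le_one x).trans (one_le_rpow hx1 hν0)

theorem sin_mul_div_sq_le {t r ν : ℝ} (ht : 0 ≤ t) (hr : 0 ≤ r) (hν0 : 0 ≤ ν) (hν2 : ν ≤ 2) :
    (sin (t * r) / r) ^ 2 ≤ t ^ ν * r ^ (ν - 2) := by
  rcases hr.eq_or_lt with rfl | hr
  · rw [div_zero, zero_pow two_ne_zero]; positivity
  calc (sin (t * r) / r) ^ 2 = sin (t * r) ^ 2 / r ^ (2 : ℝ) := by rw [div_pow, rpow_two]
    _ ≤ (t * r) ^ ν / r ^ (2 : ℝ) := by gcongr; exact sin_sq_le_rpow (by positivity) hν0 hν2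
    _ = t ^ ν * r ^ (ν - 2) := by rw [mul_rpow ht hr.le, rpow_sub hr, mul_div_assoc]

theorem integrableOn_Ioi_rpow_mul_one_add_sq_rpow {a κ : ℝ} (ha : -1 < a) (haκ : a - κ < -1) :
    IntegrableOn (fun r : ℝ ↦ r ^ a * (1 + r ^ 2) ^ (-κ / 2)) (Ioi 0) := by
  have hκ : -κ / 2 ≤ 0 := by linarith
  have hmeas : AEStronglyMeasurable (fun r : ℝ ↦ r ^ a * (1 + r ^ 2) ^ (-κ / 2)) := by
    fun_prop
  rw [← Ioc_union_Ioi_eq_Ioi zero_le_one]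
  refine IntegrableOn.union ?_ ?_
  · have hpow : IntegrableOn (fun r : ℝ ↦ r ^ a) (Ioc 0 1) := by
      rw [← intervalIntegrable_iff_integrableOn_Ioc_of_le zero_le_one]
      exact intervalIntegral.intervalIntegrable_rpow' ha
    refine hpow.mono' hmeas.restrict ?_
    filter_upwards [ae_restrict_mem measurableSet_Ioc] with r hr
    have hr0 : 0 < r := hr.1
    rw [norm_of_nonneg (by positivity)]
    calc r ^ a * (1 + r ^ 2) ^ (-κ / 2) ≤ r ^ a * 1 := by
          gcongr; exact rpow_le_one_of_one_le_of_nonpos (by nlinarith) hκ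
      _ = r ^ a := mul_one _
  · refine (integrableOn_Ioi_rpow_of_lt haκ zero_lt_one).mono' hmeas.restrict ?_
    filter_upwards [ae_restrict_mem measurableSet_Ioi] with r (hr : 1 < r)
    have hr0 : 0 < r := zero_lt_one.trans hr
    rw [norm_of_nonneg (by positivity)]
    calc r ^ a * (1 + r ^ 2) ^ (-κ / 2) ≤ r ^ a * (r ^ (2 : ℝ)) ^ (-κ / 2) := by
          gcongr r ^ a * ?_
          exact rpow_le_rpow_of_nonpos (by positivity) (by rw [rpow_two]; linarith) hκ
        _ = r ^ (a - κ) := by rw [← rpow_mul hr0.le, ← rpow_add hr0]; ring_nf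

theorem integrable_norm_rpow_mul_one_add_norm_sq_rpow {E : Type*} [NormedAddCommGroup E]
    [NormedSpace ℝ E] [FiniteDimensional ℝ E] [Nontrivial E] [MeasurableSpace E] [BorelSpace E]
    (μ : Measure E) [μ.IsAddHaarMeasure] {s κ : ℝ} (hs : -(finrank ℝ E : ℝ) < s)
    (hsκ : s - κ < -(finrank ℝ E : ℝ)) :
    Integrable (fun x : E ↦ ‖x‖ ^ s * (1 + ‖x‖ ^ 2) ^ (-κ / 2)) μ := by
  have hn : 1 ≤ finrank ℝ E := finrank_pos
  rw [integrable_fun_norm_addHaar μ (f := fun r ↦ r ^ s * (1 + r ^ 2) ^ (-κ / 2))]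
  refine (integrableOn_Ioi_rpow_mul_one_add_sq_rpow (a := finrank ℝ E - 1 + s) (κ := κ)
    (by linarith) (by linarith)).congr_fun (fun r (hr : 0 < r) ↦ ?_) measurableSet_Ioi
  dsimp only
  rw [smul_eq_mul, ← mul_assoc, rpow_add hr, ← rpow_natCast r (finrank ℝ E - 1),
    Nat.cast_sub hn, Nat.cast_one]

theorem integral_sin_mul_norm_div_sq_mul_le {E : Type*} [NormedAddCommGroup E]
    [MeasurableSpace E] (μ : Measure E) {w : E → ℝ} (hw : ∀ x, 0 ≤ w x) {t ν : ℝ} (ht : 0 ≤ t)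
    (hν0 : 0 ≤ ν) (hν2 : ν ≤ 2) (hint : Integrable (fun x ↦ ‖x‖ ^ (ν - 2) * w x) μ) :
    ∫ x, (sin (t * ‖x‖) / ‖x‖) ^ 2 * w x ∂μ ≤ t ^ ν * ∫ x, ‖x‖ ^ (ν - 2) * w x ∂μ := by
  rw [← integral_const_mul]
  refine integral_mono_of_nonneg (.of_forall fun x ↦ by have := hw x; positivity)
    (hint.const_mul _) (.of_forall fun x ↦ ?_)
  calc (sin (t * ‖x‖) / ‖x‖) ^ 2 * w x ≤ t ^ ν * ‖x‖ ^ (ν - 2) * w x :=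
        mul_le_mul_of_nonneg_right (sin_mul_div_sq_le ht (norm_nonneg x) hν0 hν2) (hw x)
    _ = t ^ ν * (‖x‖ ^ (ν - 2) * w x) := mul_assoc _ _ _

theorem stmt16_general (d : ℕ) (hd : d = 2 ∨ d = 3) (κ T ν : ℝ)
    (hν0 : 0 < ν) (hν : ν < min 2 (κ - d + 2)) :
    ∃ C > 0, ∀ t : ℝ, 0 < t → t ≤ T →
      (∫ ζ : EuclideanSpace ℝ (Fin d),
          (Real.sin (t * ‖ζ‖) / ‖ζ‖) ^ 2 * (1 + ‖ζ‖ ^ 2) ^ (-κ / 2))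
        ≤ C * t ^ ν := by
  obtain ⟨hν2, hνκ⟩ := lt_min_iff.mp hν
  have hdim : finrank ℝ (EuclideanSpace ℝ (Fin d)) = d := finrank_euclideanSpace_fin
  have hd2 : 2 ≤ d := by omega
  have : Nontrivial (EuclideanSpace ℝ (Fin d)) :=
    Module.nontrivial_of_finrank_pos (R := ℝ) (by omega)
  have hd2R : (2 : ℝ) ≤ d := by exact_mod_cast hd2
  have hint := integrable_norm_rpow_mul_one_add_norm_sq_rpow volume (s := ν - 2) (κ := κ)
    (by rw [hdim]; linarith) (by rw [hdim]; linarith)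
  set I := ∫ ζ : EuclideanSpace ℝ (Fin d), ‖ζ‖ ^ (ν - 2) * (1 + ‖ζ‖ ^ 2) ^ (-κ / 2)
  have hI : 0 ≤ I := integral_nonneg fun ζ ↦ by positivity
  refine ⟨I + 1, by positivity, fun t ht _ ↦ ?_⟩
  calc _ ≤ t ^ ν * I := integral_sin_mul_norm_div_sq_mul_le volume (fun ζ ↦ by positivity)
          ht.le hν0.le hν2.le hint
    _ ≤ (I + 1) * t ^ ν := by rw [mul_comm]; gcongr; linarith

/-- hypothesis (h3) for Bessel kernels. For `d ∈ {2,3}`, `κ > d-2`,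
`T > 0` and `0 < ν < min(2, κ-d+2)`, the spectral integral of the squared wave Fourier
transform against the Bessel spectral density is bounded by `C·tᵛ` on `(0,T]`. -/
theorem stmt16 (d : ℕ) (hd : d = 2 ∨ d = 3) (κ T ν : ℝ) (hκ : (d : ℝ) - 2 < κ)
    (hT : 0 < T) (hν0 : 0 < ν) (hν : ν < min 2 (κ - d + 2)) :
    ∃ C > 0, ∀ t : ℝ, 0 < t → t ≤ T →
      (∫ ζ : EuclideanSpace ℝ (Fin d),
          (Real.sin (t * ‖ζ‖) / ‖ζ‖) ^ 2 * (1 + ‖ζ‖ ^ 2) ^ (-κ / 2))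
        ≤ C * t ^ ν :=
  stmt16_general d hd κ T ν hν0 hν
end

section
/- Let d ∈ {2,3} and H = (H₁,…,H_d) with 1/2 < H_i < 1 for every i. Then the integral ∫_{ℝ^d} (∏_{i=1}^d |ζ_i|^{1−2H_i}) / (1 + |ζ|²) dζ is finite if and only if ∑_{i=1}^d H_i > d − 1. -/
/-!
Subordination: `1 / (1 + |ζ|²) = ∫₀^∞ e^{-(1 + |ζ|²) t} dt`. By Tonelli the integral becomes
`∫₀^∞ e^{-t} ∏ᵢ ∫_ℝ |x|^{aᵢ} e^{-t x²} dx dt` with `aᵢ = 1 - 2Hᵢ > -1`, and each Gaussian moment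
equals `Γ((aᵢ + 1)/2) t^{-(aᵢ + 1)/2}`. So the integral is a positive multiple of
`∫₀^∞ e^{-t} t^{-β} dt` with `β = ∑ᵢ (aᵢ + 1)/2 = d - ∑ᵢ Hᵢ`, which is finite iff `β < 1`.
-/

open MeasureTheory Real Set

lemma integrable_abs_rpow_mul_exp_neg_mul_sq {a t : ℝ} (ht : 0 < t) (ha : -1 < a) :
    Integrable fun x : ℝ => |x| ^ a * exp (-t * x ^ 2) := by
  have hIoi : IntegrableOn (fun x : ℝ => |x| ^ a * exp (-t * x ^ 2)) (Ioi 0) :=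
    (integrableOn_rpow_mul_exp_neg_mul_sq ht ha).congr_fun
      (fun x hx => by rw [abs_of_pos (mem_Ioi.mp hx)]) measurableSet_Ioi
  rw [← integrableOn_univ, ← Iio_union_Ici (a := (0 : ℝ)), integrableOn_union,
    integrableOn_Ici_iff_integrableOn_Ioi]
  refine ⟨?_, hIoi⟩
  rw [← (Measure.measurePreserving_neg (volume : Measure ℝ)).integrableOn_comp_preimage
      (Homeomorph.neg ℝ).measurableEmbedding]
  simpa only [Function.comp_def, neg_preimage, neg_Iio, neg_neg, neg_zero, abs_neg, neg_sq]
    using hIoi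

lemma integral_abs_rpow_mul_exp_neg_mul_sq {a t : ℝ} (ht : 0 < t) (ha : -1 < a) :
    ∫ x : ℝ, |x| ^ a * exp (-t * x ^ 2) = t ^ (-(a + 1) / 2) * Gamma ((a + 1) / 2) := by
  have h := integral_rpow_mul_exp_neg_mul_rpow two_pos ha ht
  simp only [rpow_two] at h
  calc ∫ x : ℝ, |x| ^ a * exp (-t * x ^ 2) = ∫ x : ℝ, |x| ^ a * exp (-t * |x| ^ 2) := by
        simp_rw [sq_abs]
    _ = 2 * ∫ x in Ioi (0 : ℝ), x ^ a * exp (-t * x ^ 2) :=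
        integral_comp_abs (f := fun x => x ^ a * exp (-t * x ^ 2))
    _ = t ^ (-(a + 1) / 2) * Gamma ((a + 1) / 2) := by rw [h]; ring

lemma integrableOn_exp_neg_mul_rpow_neg_Ioi_iff {β : ℝ} :
    IntegrableOn (fun t : ℝ => exp (-t) * t ^ (-β)) (Ioi 0) ↔ β < 1 := by
  refine ⟨fun h => ?_, fun hβ => by simpa using GammaIntegral_convergent (s := 1 - β) (by linarith)⟩
  have hIoo : IntegrableOn (fun t : ℝ => t ^ (-β)) (Ioo 0 1) := by
    refine Integrable.mono' ((h.mono_set Ioo_subset_Ioi_self).const_mul (exp 1))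
      (Measurable.aestronglyMeasurable (by fun_prop)) ?_
    filter_upwards [ae_restrict_mem measurableSet_Ioo] with t ⟨ht0, ht1⟩
    have : 1 ≤ exp 1 * exp (-t) := by
      rw [← exp_add]; exact one_le_exp (by linarith)
    rw [norm_of_nonneg (rpow_pos_of_pos ht0 _).le, ← mul_assoc]
    exact le_mul_of_one_le_left (rpow_pos_of_pos ht0 _).le this
  rw [intervalIntegral.integrableOn_Ioo_rpow_iff one_pos] at hIoo
  linarith

lemma integral_exp_neg_mul_Ioi {c : ℝ} (hc : 0 < c) :
    ∫ t in Ioi (0 : ℝ), exp (-(c * t)) = c⁻¹ := by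
  have h := integral_exp_mul_Ioi (neg_lt_zero.mpr hc) 0
  rw [mul_zero, exp_zero, neg_div_neg_eq, one_div] at h
  simpa only [neg_mul] using h

lemma integrable_div_iff_integrable_mul_exp_neg_mul {E : Type*} [MeasurableSpace E]
    {μ : Measure E} [SFinite μ] {f c : E → ℝ} (hf : Measurable f) (hc : Measurable c)
    (hc0 : ∀ x, 0 < c x) :
    Integrable (fun x => f x / c x) μ ↔
      Integrable (fun p : ℝ × E => f p.2 * exp (-(c p.2 * p.1)))
        ((volume.restrict (Ioi 0)).prod μ) := by
  rw [integrable_prod_iff' (Measurable.aestronglyMeasurable (by fun_prop))]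
  have hslices : ∀ x, Integrable (fun t => f x * exp (-(c x * t))) (volume.restrict (Ioi 0)) :=
    fun x => by simpa only [neg_mul] using (exp_neg_integrableOn_Ioi 0 (hc0 x)).const_mul (f x)
  have hnorms : (fun x => ∫ t in Ioi 0, ‖f x * exp (-(c x * t))‖) = fun x => ‖f x / c x‖ := by
    funext x
    simp_rw [norm_mul, norm_of_nonneg (exp_pos _).le]
    rw [integral_const_mul, integral_exp_neg_mul_Ioi (hc0 x), norm_div,
      norm_of_nonneg (hc0 x).le, div_eq_mul_inv]
  rw [hnorms, integrable_norm_iff (Measurable.aestronglyMeasurable (by fun_prop)),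
    and_iff_right (Filter.Eventually.of_forall hslices)]

section GaussianMoments

variable {ι : Type*} [Fintype ι] {a : ι → ℝ}

lemma prod_abs_rpow_mul_exp_neg_one_add_sum_sq (t : ℝ) (x : ι → ℝ) :
    (∏ i, |x i| ^ a i) * exp (-((1 + ∑ i, x i ^ 2) * t))
      = exp (-t) * ∏ i, |x i| ^ a i * exp (-t * x i ^ 2) := by
  rw [Finset.prod_mul_distrib, ← exp_sum, mul_left_comm, ← exp_add, add_mul, one_mul,
    Finset.sum_mul, neg_add, ← Finset.sum_neg_distrib]
  simp only [neg_mul, mul_comm]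

lemma integrable_prod_abs_rpow_mul_exp_neg_one_add_sum_sq (ha : ∀ i, -1 < a i) {t : ℝ}
    (ht : 0 < t) :
    Integrable fun x : ι → ℝ => (∏ i, |x i| ^ a i) * exp (-((1 + ∑ i, x i ^ 2) * t)) := by
  simp_rw [prod_abs_rpow_mul_exp_neg_one_add_sum_sq]
  exact (Integrable.fintype_prod (f := fun i u => |u| ^ a i * exp (-t * u ^ 2))
    fun i => integrable_abs_rpow_mul_exp_neg_mul_sq ht (ha i)).const_mul _

lemma integral_prod_abs_rpow_mul_exp_neg_one_add_sum_sq (ha : ∀ i, -1 < a i) {t : ℝ}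
    (ht : 0 < t) :
    ∫ x : ι → ℝ, (∏ i, |x i| ^ a i) * exp (-((1 + ∑ i, x i ^ 2) * t))
      = (∏ i, Gamma ((a i + 1) / 2)) * (exp (-t) * t ^ (-∑ i, (a i + 1) / 2)) := by
  simp_rw [prod_abs_rpow_mul_exp_neg_one_add_sum_sq]
  rw [integral_const_mul, integral_fintype_prod_volume_eq_prod
      (fun i u => |u| ^ a i * exp (-t * u ^ 2)),
    Finset.prod_congr rfl fun i _ => integral_abs_rpow_mul_exp_neg_mul_sq ht (ha i),
    Finset.prod_mul_distrib, ← rpow_sum_of_pos ht, ← Finset.sum_neg_distrib]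
  simp only [neg_div]
  ring

theorem integrable_prod_abs_rpow_div_one_add_sum_sq_iff (ha : ∀ i, -1 < a i) :
    Integrable (fun x : ι → ℝ => (∏ i, |x i| ^ a i) / (1 + ∑ i, x i ^ 2))
      ↔ ∑ i, (a i + 1) / 2 < 1 := by
  rw [integrable_div_iff_integrable_mul_exp_neg_mul (by fun_prop) (by fun_prop)
      (fun x => by positivity),
    integrable_prod_iff (Measurable.aestronglyMeasurable (by fun_prop))]
  have hslices := ae_restrict_of_forall_mem (μ := volume) measurableSet_Ioi fun t (ht : 0 < t) =>
    integrable_prod_abs_rpow_mul_exp_neg_one_add_sum_sq ha ht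
  have hnorms : (fun t => ∫ x : ι → ℝ, ‖(∏ i, |x i| ^ a i) * exp (-((1 + ∑ i, x i ^ 2) * t))‖)
      =ᵐ[volume.restrict (Ioi 0)]
        fun t => (∏ i, Gamma ((a i + 1) / 2)) * (exp (-t) * t ^ (-∑ i, (a i + 1) / 2)) := by
    refine ae_restrict_of_forall_mem measurableSet_Ioi fun t (ht : 0 < t) => ?_
    simp_rw [norm_of_nonneg (mul_nonneg (Finset.prod_nonneg fun i _ =>
      rpow_nonneg (abs_nonneg _) _) (exp_pos _).le)]
    exact integral_prod_abs_rpow_mul_exp_neg_one_add_sum_sq ha ht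
  have hGamma : 0 < ∏ i, Gamma ((a i + 1) / 2) :=
    Finset.prod_pos fun i _ => Gamma_pos_of_pos (by linarith [ha i])
  rw [and_iff_right hslices, integrable_congr hnorms, integrable_const_mul_iff hGamma.ne'.isUnit,
    ← IntegrableOn, integrableOn_exp_neg_mul_rpow_neg_Ioi_iff]

end GaussianMoments

lemma integrable_comp_ofLp_iff {ι : Type*} [Fintype ι] {f : (ι → ℝ) → ℝ} :
    Integrable (fun x : EuclideanSpace ℝ ι => f x) ↔ Integrable f :=
  (PiLp.volume_preserving_ofLp ι).integrable_comp_emb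
    (MeasurableEquiv.toLp 2 (ι → ℝ)).symm.measurableEmbedding

theorem stmt17_general (d : ℕ) (H : Fin d → ℝ)
    (hH : ∀ i, 1 / 2 < H i ∧ H i < 1) :
    Integrable (fun ζ : EuclideanSpace ℝ (Fin d) =>
        (∏ i, |ζ i| ^ (1 - 2 * H i)) / (1 + ‖ζ‖ ^ 2))
      ↔ (d : ℝ) - 1 < ∑ i, H i := by
  have ha : ∀ i, -1 < 1 - 2 * H i := fun i => by linarith [(hH i).2]
  have hsum : ∑ i, (1 - 2 * H i + 1) / 2 = d - ∑ i, H i := by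
    simp only [show ∀ i, (1 - 2 * H i + 1) / 2 = 1 - H i from fun i => by ring,
      Finset.sum_sub_distrib, Finset.sum_const, Finset.card_univ, Fintype.card_fin, nsmul_one]
  simp_rw [EuclideanSpace.real_norm_sq_eq]
  rw [integrable_comp_ofLp_iff (f := fun x => (∏ i, |x i| ^ (1 - 2 * H i)) / (1 + ∑ i, x i ^ 2)),
    integrable_prod_abs_rpow_div_one_add_sum_sq_iff ha, hsum]
  constructor <;> intro <;> linarith

/-- hypothesis (h0) for fractional kernels. For `d ∈ {2,3}` and
`1/2 < Hᵢ < 1`, the integral `∫_{ℝ^d} (∏ᵢ |ζᵢ|^{1-2Hᵢ})/(1+|ζ|²) dζ` is finite iff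
`∑ᵢ Hᵢ > d - 1`. -/
theorem stmt17 (d : ℕ) (hd : d = 2 ∨ d = 3) (H : Fin d → ℝ)
    (hH : ∀ i, 1 / 2 < H i ∧ H i < 1) :
    Integrable (fun ζ : EuclideanSpace ℝ (Fin d) =>
        (∏ i, |ζ i| ^ (1 - 2 * H i)) / (1 + ‖ζ‖ ^ 2))
      ↔ (d : ℝ) - 1 < ∑ i, H i :=
  stmt17_general d H hH
end

section
/- Let d ∈ {2,3} and H = (H₁,…,H_d) with 1/2 < H_i < 1 for every i and ∑_{i=1}^d H_i > d − 1, and set κ̄ = ∑_{i=1}^d H_i − (d − 1) > 0. Then for every γ > 0, the integral ∫_{ℝ^d} (∏_{i=1}^d |ζ_i|^{1−2H_i}) / (1 + |ζ|^{2−2γ}) dζ is finite if and only if γ < κ̄. -/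
/-!
Write `a i = 1 - 2 H i ∈ (-1, 0)` and `c = 2 - 2γ`; then `γ < κ̄` reads `∑ i, (1 + a i) < c`.

If it holds, split `c = ∑ i, e i` with `e i > 1 + a i`. Since
`∏ i, max 1 |ζ i| ^ e i ≤ 1 + ‖ζ‖ ^ c`, the integrand is dominated by the product of the
integrable one-dimensional functions `|t| ^ a i * max 1 |t| ^ (-e i)`.

If it fails, then on the cube `[t, 2t)^d` (`t ≥ 1`) the integrand is at least a constant times
`t ^ (∑ i, a i - max c 0)`, while the cube has volume `t ^ d`; so each of the disjoint cubes with
`t = 2 ^ k` carries at least a fixed positive amount of the integral.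
-/

open MeasureTheory Set

lemma integrable_of_even_of_integrableOn_Ioi {E : Type*} [NormedAddCommGroup E] {f : ℝ → E}
    (heven : ∀ t, f (-t) = f t) (hf : IntegrableOn f (Ioi 0)) : Integrable f := by
  rw [← integrableOn_univ, ← Iio_union_Ici (a := (0 : ℝ)), integrableOn_union,
    integrableOn_Ici_iff_integrableOn_Ioi]
  refine ⟨?_, hf⟩
  rw [← (Measure.measurePreserving_neg (volume : Measure ℝ)).integrableOn_comp_preimage
    (Homeomorph.neg ℝ).measurableEmbedding]
  simpa [Function.comp_def, heven] using hf

lemma integrable_abs_rpow_mul_max_one_rpow {a b : ℝ} (ha : -1 < a) (hab : a + b < -1) :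
    Integrable (fun t : ℝ => |t| ^ a * max 1 |t| ^ b) := by
  refine integrable_of_even_of_integrableOn_Ioi (fun t => by simp only [abs_neg]) ?_
  rw [← Ioc_union_Ioi_eq_Ioi zero_le_one, integrableOn_union]
  constructor
  · refine ((intervalIntegral.integrableOn_Ioo_rpow_iff one_pos).2 ha).congr_set_ae
      Ioo_ae_eq_Ioc.symm |>.congr_fun (fun t ht => ?_) measurableSet_Ioc
    rw [abs_of_pos ht.1, max_eq_left ht.2, Real.one_rpow, mul_one]
  · refine ((integrableOn_Ioi_rpow_iff one_pos).2 hab).congr_fun (fun t ht => ?_) measurableSet_Ioi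
    have ht0 : 0 < t := one_pos.trans ht
    rw [abs_of_pos ht0, max_eq_right ht.le]
    exact Real.rpow_add ht0 a b

lemma lintegral_eq_top_of_forall_le_setLIntegral {α : Type*} [MeasurableSpace α] {μ : Measure α}
    {f : α → ENNReal} {s : ℕ → Set α} (hs : ∀ k, MeasurableSet (s k))
    (hd : Pairwise (Function.onFun Disjoint s)) {ε : ENNReal} (hε : ε ≠ 0)
    (h : ∀ k, ε ≤ ∫⁻ x in s k, f x ∂μ) : ∫⁻ x, f x ∂μ = ⊤ :=
  top_le_iff.1 <| calc
    ⊤ = ∑' _k : ℕ, ε := (ENNReal.tsum_const_eq_top_of_ne_zero hε).symm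
    _ ≤ ∑' k, ∫⁻ x in s k, f x ∂μ := ENNReal.tsum_le_tsum h
    _ = ∫⁻ x in ⋃ k, s k, f x ∂μ := (lintegral_iUnion hs hd f).symm
    _ ≤ ∫⁻ x, f x ∂μ := setLIntegral_le_lintegral _ _

def cubeIco (ι : Type*) (t : ℝ) : Set (EuclideanSpace ℝ ι) :=
  WithLp.ofLp ⁻¹' univ.pi fun _ => Ico t (2 * t)

variable {ι : Type*}

lemma pairwise_disjoint_cubeIco_two_pow [Nonempty ι] :
    Pairwise (Function.onFun Disjoint fun k : ℕ => cubeIco ι (2 ^ k)) := by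
  intro k l hkl
  wlog hlt : k < l generalizing k l
  · exact (this hkl.symm (by omega)).symm
  refine Disjoint.preimage _ (disjoint_univ_pi.2 ⟨Classical.arbitrary ι, ?_⟩)
  have : (2 : ℝ) * 2 ^ k ≤ 2 ^ l := by
    rw [← pow_succ']
    exact pow_le_pow_right₀ one_le_two hlt
  exact Set.disjoint_left.2 fun x hk hl => (hk.2.trans_le this).not_ge hl.1

variable [Fintype ι]

lemma EuclideanSpace.prod_max_one_rpow_le_one_add_norm_rpow {e : ι → ℝ} (he : ∀ i, 0 ≤ e i)
    (ζ : EuclideanSpace ℝ ι) : ∏ i, max 1 |ζ i| ^ e i ≤ 1 + ‖ζ‖ ^ ∑ i, e i := by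
  have hM : 0 < max 1 ‖ζ‖ := one_pos.trans_le (le_max_left _ _)
  calc ∏ i, max 1 |ζ i| ^ e i ≤ ∏ i, max 1 ‖ζ‖ ^ e i := by
        gcongr with i
        · exact he i
        exact (Real.norm_eq_abs (ζ i)).symm.trans_le (PiLp.norm_apply_le ζ i)
    _ = max 1 ‖ζ‖ ^ ∑ i, e i := (Real.rpow_sum_of_pos hM _ _).symm
    _ ≤ 1 + ‖ζ‖ ^ ∑ i, e i := by
        rcases le_total ‖ζ‖ 1 with h | h
        · rw [max_eq_left h, Real.one_rpow]
          linarith [Real.rpow_nonneg (norm_nonneg ζ) (∑ i, e i)]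
        · rw [max_eq_right h]
          linarith

theorem integrable_prod_abs_rpow_div_one_add_norm_rpow [Nonempty ι] {a : ι → ℝ} {c : ℝ}
    (ha : ∀ i, -1 < a i) (hc : ∑ i, (1 + a i) < c) :
    Integrable (fun ζ : EuclideanSpace ℝ ι => (∏ i, |ζ i| ^ a i) / (1 + ‖ζ‖ ^ c)) := by
  set δ := (c - ∑ i, (1 + a i)) / Fintype.card ι
  have hδ : 0 < δ := div_pos (sub_pos.2 hc) (Nat.cast_pos.2 Fintype.card_pos)
  set e : ι → ℝ := fun i => 1 + a i + δ
  have he : ∀ i, 0 ≤ e i := fun i => by linarith [ha i]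
  have hesum : ∑ i, e i = c := by
    simp only [e, Finset.sum_add_distrib, Finset.sum_const, Finset.card_univ, nsmul_eq_mul, δ]
    field_simp
    ring
  have hprod : Integrable
      (fun ζ : EuclideanSpace ℝ ι => ∏ i, |ζ i| ^ a i * max 1 |ζ i| ^ (-e i)) :=
    (PiLp.volume_preserving_ofLp ι).integrable_comp_emb
      (MeasurableEquiv.toLp 2 (ι → ℝ)).symm.measurableEmbedding |>.2 <|
      Integrable.fintype_prod fun i =>
        integrable_abs_rpow_mul_max_one_rpow (ha i) (by simp only [e]; linarith)
  refine hprod.mono' (Measurable.aestronglyMeasurable (by fun_prop))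
    (Filter.Eventually.of_forall fun ζ => ?_)
  have hD : 0 < ∏ i, max 1 |ζ i| ^ e i :=
    Finset.prod_pos fun i _ => Real.rpow_pos_of_pos (one_pos.trans_le (le_max_left _ _)) _
  rw [Real.norm_of_nonneg (by positivity)]
  calc (∏ i, |ζ i| ^ a i) / (1 + ‖ζ‖ ^ c) ≤ (∏ i, |ζ i| ^ a i) / ∏ i, max 1 |ζ i| ^ e i := by
        gcongr
        exact hesum ▸ EuclideanSpace.prod_max_one_rpow_le_one_add_norm_rpow he ζ
    _ = ∏ i, |ζ i| ^ a i * max 1 |ζ i| ^ (-e i) := by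
        simp only [Real.rpow_neg (zero_le_one.trans (le_max_left _ _)), div_eq_mul_inv,
          Finset.prod_mul_distrib, Finset.prod_inv_distrib]

lemma measurableSet_cubeIco (t : ℝ) : MeasurableSet (cubeIco ι t) :=
  (MeasurableSet.univ_pi fun _ => measurableSet_Ico).preimage (by fun_prop)

lemma volume_cubeIco {t : ℝ} (ht : 0 ≤ t) :
    volume (cubeIco ι t) = ENNReal.ofReal (t ^ Fintype.card ι) := by
  rw [cubeIco, (PiLp.volume_preserving_ofLp ι).measure_preimage
    (MeasurableSet.univ_pi fun _ => measurableSet_Ico).nullMeasurableSet, volume_pi_pi]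
  simp [Real.volume_Ico, two_mul, ENNReal.ofReal_pow ht]

lemma EuclideanSpace.norm_le_sqrt_card_mul {M : ℝ} (hM : 0 ≤ M) {ζ : EuclideanSpace ℝ ι}
    (hζ : ∀ i, |ζ i| ≤ M) : ‖ζ‖ ≤ √(Fintype.card ι) * M := by
  rw [EuclideanSpace.norm_eq, ← Real.sqrt_sq hM, ← Real.sqrt_mul (Nat.cast_nonneg _)]
  gcongr
  calc ∑ i, ‖ζ i‖ ^ 2 ≤ ∑ _i : ι, M ^ 2 := by
        gcongr with i
        exact (Real.norm_eq_abs _).trans_le (hζ i)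
    _ = _ := by simp

lemma exists_mul_rpow_le_on_cubeIco [Nonempty ι] {a : ι → ℝ} (ha : ∀ i, a i ≤ 0) (c : ℝ) :
    ∃ C > 0, ∀ t ≥ 1, ∀ ζ ∈ cubeIco ι t,
      C * t ^ (∑ i, a i - max c 0) ≤ (∏ i, |ζ i| ^ a i) / (1 + ‖ζ‖ ^ c) := by
  set m := max c 0
  set K := 2 * √(Fintype.card ι)
  have hK : 0 < K := by positivity
  refine ⟨2 ^ (∑ i, a i) / (2 * K ^ m), by positivity, fun t ht ζ hζ => ?_⟩
  have ht0 : 0 < t := one_pos.trans_le ht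
  have hζt : ∀ i, t ≤ ζ i ∧ ζ i < 2 * t := fun i => hζ i (mem_univ i)
  have habs : ∀ i, |ζ i| = ζ i := fun i => abs_of_pos (ht0.trans_le (hζt i).1)
  have hnum : (2 * t) ^ ∑ i, a i ≤ ∏ i, |ζ i| ^ a i := by
    rw [Real.rpow_sum_of_pos (by positivity)]
    refine Finset.prod_le_prod (fun i _ => by positivity) fun i _ => ?_
    rw [habs]
    exact Real.rpow_le_rpow_of_nonpos (ht0.trans_le (hζt i).1) (hζt i).2.le (ha i)
  have hnorm_ge : 1 ≤ ‖ζ‖ := by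
    obtain ⟨i⟩ := ‹Nonempty ι›
    calc 1 ≤ |ζ i| := ht.trans ((hζt i).1.trans (habs i).ge)
      _ = ‖ζ i‖ := (Real.norm_eq_abs _).symm
      _ ≤ ‖ζ‖ := PiLp.norm_apply_le ζ i
  have hnorm_le : ‖ζ‖ ≤ K * t := calc
    ‖ζ‖ ≤ √(Fintype.card ι) * (2 * t) := EuclideanSpace.norm_le_sqrt_card_mul (by positivity)
      fun i => (habs i).trans_le (hζt i).2.le
    _ = K * t := by ring
  have hden : 1 + ‖ζ‖ ^ c ≤ 2 * (K * t) ^ m := by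
    have h1 : 1 ≤ (K * t) ^ m := Real.one_le_rpow (hnorm_ge.trans hnorm_le) (le_max_right _ _)
    have h2 : ‖ζ‖ ^ c ≤ (K * t) ^ m :=
      (Real.rpow_le_rpow_of_exponent_le hnorm_ge (le_max_left _ _)).trans
        (Real.rpow_le_rpow (norm_nonneg _) hnorm_le (le_max_right _ _))
    linarith
  calc 2 ^ (∑ i, a i) / (2 * K ^ m) * t ^ (∑ i, a i - m)
      = (2 * t) ^ (∑ i, a i) / (2 * (K * t) ^ m) := by
        rw [Real.mul_rpow two_pos.le ht0.le, Real.mul_rpow hK.le ht0.le, Real.rpow_sub ht0]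
        field_simp
    _ ≤ (∏ i, |ζ i| ^ a i) / (1 + ‖ζ‖ ^ c) := by
        gcongr

theorem not_integrable_prod_abs_rpow_div_one_add_norm_rpow [Nonempty ι] {a : ι → ℝ} {c : ℝ}
    (ha : ∀ i, a i ≤ 0) (hc : max c 0 ≤ ∑ i, (1 + a i)) :
    ¬ Integrable (fun ζ : EuclideanSpace ℝ ι => (∏ i, |ζ i| ^ a i) / (1 + ‖ζ‖ ^ c)) := by
  intro hf
  obtain ⟨C, hC, hle⟩ := exists_mul_rpow_le_on_cubeIco ha c
  refine hf.hasFiniteIntegral.ne (lintegral_eq_top_of_forall_le_setLIntegral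
    (fun k => measurableSet_cubeIco (2 ^ k)) pairwise_disjoint_cubeIco_two_pow
    (ENNReal.ofReal_pos.2 hC).ne' fun k => ?_)
  set t : ℝ := 2 ^ k
  have ht : 1 ≤ t := one_le_pow₀ one_le_two
  have hexp : 0 ≤ ∑ i, a i - max c 0 + Fintype.card ι := by
    simp only [Finset.sum_add_distrib, Finset.sum_const, Finset.card_univ, nsmul_eq_mul,
      mul_one] at hc
    linarith
  calc ENNReal.ofReal C
      ≤ ENNReal.ofReal (C * t ^ (∑ i, a i - max c 0)) * volume (cubeIco ι t) := by
        rw [volume_cubeIco (zero_le_one.trans ht), ← ENNReal.ofReal_mul (by positivity), mul_assoc,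
          ← Real.rpow_natCast, ← Real.rpow_add (zero_lt_one.trans_le ht)]
        exact ENNReal.ofReal_le_ofReal (le_mul_of_one_le_right hC.le (Real.one_le_rpow ht hexp))
    _ = ∫⁻ _ in cubeIco ι t, ENNReal.ofReal (C * t ^ (∑ i, a i - max c 0)) :=
        (setLIntegral_const _ _).symm
    _ ≤ ∫⁻ ζ in cubeIco ι t, ‖(∏ i, |ζ i| ^ a i) / (1 + ‖ζ‖ ^ c)‖ₑ :=
        setLIntegral_mono' (measurableSet_cubeIco t) fun ζ hζ => by
          rw [Real.enorm_eq_ofReal_abs]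
          exact ENNReal.ofReal_le_ofReal ((hle t ht ζ hζ).trans (le_abs_self _))

theorem stmt18_general (d : ℕ) (hd : d = 2 ∨ d = 3) (H : Fin d → ℝ)
    (hH : ∀ i, 1 / 2 < H i ∧ H i < 1)
    (γ : ℝ) :
    Integrable (fun ζ : EuclideanSpace ℝ (Fin d) =>
        (∏ i, |ζ i| ^ (1 - 2 * H i)) / (1 + ‖ζ‖ ^ (2 - 2 * γ)))
      ↔ γ < (∑ i, H i) - ((d : ℝ) - 1) := by
  have : Nonempty (Fin d) := ⟨⟨0, by omega⟩⟩
  have hsum : ∑ i, (1 + (1 - 2 * H i)) = 2 * (d - ∑ i, H i) := by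
    simp only [Finset.sum_add_distrib, Finset.sum_sub_distrib, ← Finset.mul_sum, Finset.sum_const,
      Finset.card_univ, Fintype.card_fin, nsmul_eq_mul]
    ring
  have hHd : ∑ i, H i ≤ d := by
    simpa using Finset.sum_le_sum fun i (_ : i ∈ Finset.univ) => (hH i).2.le
  constructor
  · intro hf
    by_contra! hγ
    refine not_integrable_prod_abs_rpow_div_one_add_norm_rpow (fun i => ?_) ?_ hf
    · linarith [hH i]
    · rw [hsum]
      exact max_le (by linarith) (by linarith)
  · intro hγ
    refine integrable_prod_abs_rpow_div_one_add_norm_rpow (fun i => ?_) ?_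
    · linarith [hH i]
    · rw [hsum]
      linarith

/-- hypothesis (h2) for fractional kernels. For `d ∈ {2,3}`,
`1/2 < Hᵢ < 1` with `∑ᵢ Hᵢ > d - 1` and `κ̄ = ∑ᵢ Hᵢ - (d-1)`, for every `γ > 0` the
integral `∫_{ℝ^d} (∏ᵢ |ζᵢ|^{1-2Hᵢ})/(1+|ζ|^{2-2γ}) dζ` is finite iff `γ < κ̄`. -/
theorem stmt18 (d : ℕ) (hd : d = 2 ∨ d = 3) (H : Fin d → ℝ)
    (hH : ∀ i, 1 / 2 < H i ∧ H i < 1) (hsum : (d : ℝ) - 1 < ∑ i, H i)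
    (γ : ℝ) (hγ : 0 < γ) :
    Integrable (fun ζ : EuclideanSpace ℝ (Fin d) =>
        (∏ i, |ζ i| ^ (1 - 2 * H i)) / (1 + ‖ζ‖ ^ (2 - 2 * γ)))
      ↔ γ < (∑ i, H i) - ((d : ℝ) - 1) :=
  stmt18_general d hd H hH γ
end

section
/- Let d ∈ {2,3} and H = (H₁,…,H_d) with 1/2 < H_i < 1 for every i and ∑_{i=1}^d H_i > d − 1, and set κ̄ = ∑_{i=1}^d H_i − (d − 1) > 0. Then J_H := ∫_{ℝ^d} (sin(|η|)/|η|)² · ∏_{i=1}^d |η_i|^{1−2H_i} dη < ∞, and for every t > 0: ∫_{ℝ^d} (sin(t|ζ|)/|ζ|)² · ∏_{i=1}^d |ζ_i|^{1−2H_i} dζ = t^{2κ̄} · J_H. In particular, for every T > 0 there is a constant C > 0 with ∫_{ℝ^d} (sin(t|ζ|)/|ζ|)² ∏_{i=1}^d |ζ_i|^{1−2H_i} dζ ≤ C t^{2κ̄} for all t ∈ (0,T]. -/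
/-!
The substitution `ζ = η / t` turns the integrand at time `t` into `t ^ (2 - d - ∑ᵢ aᵢ)` times the
integrand at time `1`, where `aᵢ = 1 - 2Hᵢ`; that exponent is `2κ̄`, so everything reduces to
`J_H < ∞`. For weights `wᵢ ≥ 0` with `∑ᵢ wᵢ ≤ 1`, since `|ηᵢ| ≤ |η|`,
`(sin |η| / |η|)² ≤ min 1 |η|⁻² ≤ ∏ᵢ min 1 |ηᵢ|^(-2wᵢ)`, so the integrand is dominated by the
product of the one-dimensional functions `min (|x|^aᵢ) (|x|^(aᵢ - 2wᵢ))`. These are integrable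
once `wᵢ > (1 + aᵢ)/2 = 1 - Hᵢ`, and such weights exist precisely because `∑ᵢ (1 - Hᵢ) < 1`.
-/

open MeasureTheory Set

lemma integrableOn_Ioi_min_rpow {a b : ℝ} (ha : -1 < a) (hb : b < -1) :
    IntegrableOn (fun y : ℝ => min (y ^ a) (y ^ b)) (Ioi 0) := by
  have hmeas : Measurable fun y : ℝ => min (y ^ a) (y ^ b) := by fun_prop
  rw [← Ioc_union_Ioi_eq_Ioi zero_le_one]
  refine IntegrableOn.union ?_ ?_
  · refine ((intervalIntegrable_iff_integrableOn_Ioc_of_le zero_le_one).1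
      (intervalIntegral.intervalIntegrable_rpow' ha)).mono' hmeas.aestronglyMeasurable.restrict ?_
    filter_upwards [ae_restrict_mem measurableSet_Ioc] with y hy
    rw [Real.norm_of_nonneg (le_min (Real.rpow_nonneg hy.1.le a) (Real.rpow_nonneg hy.1.le b))]
    exact min_le_left _ _
  · refine (integrableOn_Ioi_rpow_of_lt hb one_pos).mono' hmeas.aestronglyMeasurable.restrict ?_
    filter_upwards [ae_restrict_mem measurableSet_Ioi] with y hy
    have hy0 : 0 ≤ y := zero_le_one.trans (le_of_lt hy)
    rw [Real.norm_of_nonneg (le_min (Real.rpow_nonneg hy0 a) (Real.rpow_nonneg hy0 b))]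
    exact min_le_right _ _

lemma integrable_min_abs_rpow {a b : ℝ} (ha : -1 < a) (hb : b < -1) :
    Integrable fun x : ℝ => min (|x| ^ a) (|x| ^ b) := by
  have := (integrable_fun_norm_addHaar (μ := volume) (E := ℝ)
    (f := fun y => min (y ^ a) (y ^ b))).2 (by simpa using integrableOn_Ioi_min_rpow ha hb)
  simpa only [Real.norm_eq_abs] using this

lemma sin_div_sq_le_min (r : ℝ) : (Real.sin r / r) ^ 2 ≤ min 1 (r ^ 2)⁻¹ := by
  rw [div_pow, div_eq_mul_inv]
  refine le_min ?_ (mul_le_of_le_one_left (by positivity) (Real.sin_sq_le_one r))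
  rcases eq_or_ne r 0 with rfl | hr
  · simp
  · rw [← div_eq_mul_inv, div_le_one (by positivity)]
    exact Real.sin_sq_le_sq

variable {ι : Type*} [Fintype ι]

lemma integrable_prod_apply_euclideanSpace {g : ι → ℝ → ℝ}
    (hg : ∀ i, Integrable (g i)) :
    Integrable fun η : EuclideanSpace ℝ ι => ∏ i, g i (η i) :=
  (EuclideanSpace.volume_preserving_symm_measurableEquiv_toLp ι).integrable_comp_emb
    (MeasurableEquiv.measurableEmbedding _) |>.mpr (Integrable.fintype_prod hg)

lemma exists_lt_weights_sum_le_one {c : ι → ℝ} (hc : ∑ i, c i < 1) :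
    ∃ w : ι → ℝ, (∀ i, c i < w i) ∧ ∑ i, w i ≤ 1 := by
  set ε := (1 - ∑ i, c i) / (Fintype.card ι + 1)
  have hε : 0 < ε := div_pos (by linarith) (by positivity)
  refine ⟨fun i => c i + ε, fun i => by linarith, ?_⟩
  have : (Fintype.card ι + 1) * ε = 1 - ∑ i, c i := mul_div_cancel₀ _ (by positivity)
  simp only [Finset.sum_add_distrib, Finset.sum_const, Finset.card_univ, nsmul_eq_mul]
  linarith

lemma sin_norm_div_norm_sq_le_prod {w : ι → ℝ} (hw : ∀ i, 0 ≤ w i) (hw1 : ∑ i, w i ≤ 1)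
    {η : EuclideanSpace ℝ ι} (hη : ∀ i, η i ≠ 0) :
    (Real.sin ‖η‖ / ‖η‖) ^ 2 ≤ ∏ i, min 1 (|η i| ^ (-2 * w i)) := by
  set m := min 1 (‖η‖ ^ 2)⁻¹
  have hm0 : 0 ≤ m := le_min zero_le_one (by positivity)
  have hm1 : m ≤ 1 := min_le_left _ _
  calc (Real.sin ‖η‖ / ‖η‖) ^ 2 ≤ m := sin_div_sq_le_min _
    _ ≤ m ^ ∑ i, w i := by
      simpa using Real.rpow_le_rpow_of_exponent_ge' hm0 hm1 (Finset.sum_nonneg fun i _ => hw i) hw1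
    _ = ∏ i, m ^ w i := Real.rpow_sum_of_nonneg hm0 fun i _ => hw i
    _ ≤ ∏ i, min 1 (|η i| ^ (-2 * w i)) := by
      refine Finset.prod_le_prod (fun i _ => by positivity) fun i _ =>
        le_min (Real.rpow_le_one hm0 hm1 (hw i)) ?_
      have hpos : 0 < |η i| := abs_pos.2 (hη i)
      have hcoord : |η i| ≤ ‖η‖ := by simpa only [Real.norm_eq_abs] using PiLp.norm_apply_le η i
      have hm : m ≤ |η i| ^ (-2 : ℝ) := by
        rw [Real.rpow_neg hpos.le, Real.rpow_two]
        exact (min_le_right _ _).trans (inv_anti₀ (by positivity) (pow_le_pow_left₀ hpos.le hcoord 2))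
      calc m ^ w i ≤ (|η i| ^ (-2 : ℝ)) ^ w i := Real.rpow_le_rpow hm0 hm (hw i)
        _ = |η i| ^ (-2 * w i) := by rw [← Real.rpow_mul hpos.le]

lemma sin_norm_div_norm_sq_mul_prod_le {a w : ι → ℝ} (ha : ∀ i, a i < 0) (hw : ∀ i, 0 ≤ w i)
    (hw1 : ∑ i, w i ≤ 1) (η : EuclideanSpace ℝ ι) :
    (Real.sin ‖η‖ / ‖η‖) ^ 2 * ∏ i, |η i| ^ a i
      ≤ ∏ i, min (|η i| ^ a i) (|η i| ^ (a i - 2 * w i)) := by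
  by_cases hη : ∀ i, η i ≠ 0
  · calc _ ≤ (∏ i, min 1 (|η i| ^ (-2 * w i))) * ∏ i, |η i| ^ a i := by
          gcongr; exact sin_norm_div_norm_sq_le_prod hw hw1 hη
      _ = _ := by
        rw [← Finset.prod_mul_distrib]
        refine Finset.prod_congr rfl fun i _ => ?_
        rw [min_mul_of_nonneg _ _ (by positivity), one_mul, ← Real.rpow_add (abs_pos.2 (hη i))]
        congr 2; ring
  · obtain ⟨i, hi⟩ := not_forall_not.mp hη
    rw [Finset.prod_eq_zero (Finset.mem_univ i) (by rw [hi, abs_zero, Real.zero_rpow (ha i).ne]),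
      mul_zero]
    exact Finset.prod_nonneg fun i _ => le_min (by positivity) (by positivity)

theorem integrable_sin_norm_div_norm_sq_mul_prod_abs_rpow {a : ι → ℝ}
    (ha : ∀ i, -1 < a i ∧ a i < 0) (hsum : ∑ i, (1 + a i) / 2 < 1) :
    Integrable fun η : EuclideanSpace ℝ ι => (Real.sin ‖η‖ / ‖η‖) ^ 2 * ∏ i, |η i| ^ a i := by
  obtain ⟨w, hcw, hw1⟩ := exists_lt_weights_sum_le_one hsum
  have hw : ∀ i, 0 ≤ w i := fun i => by linarith [hcw i, (ha i).1]
  have hdom := integrable_prod_apply_euclideanSpace fun i =>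
    integrable_min_abs_rpow (ha i).1 (b := a i - 2 * w i) (by linarith [hcw i])
  refine hdom.mono' (by fun_prop) (.of_forall fun η => ?_)
  rw [Real.norm_of_nonneg (by positivity)]
  exact sin_norm_div_norm_sq_mul_prod_le (fun i => (ha i).2) hw hw1 η

lemma sin_mul_norm_div_norm_sq_mul_prod_eq (a : ι → ℝ) {t : ℝ} (ht : 0 < t)
    (ζ : EuclideanSpace ℝ ι) :
    (Real.sin (t * ‖ζ‖) / ‖ζ‖) ^ 2 * ∏ i, |ζ i| ^ a i
      = t ^ (2 - ∑ i, a i) * ((Real.sin ‖t • ζ‖ / ‖t • ζ‖) ^ 2 * ∏ i, |(t • ζ) i| ^ a i) := by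
  have hnorm : ‖t • ζ‖ = t * ‖ζ‖ := by rw [norm_smul, Real.norm_of_nonneg ht.le]
  have hprod : ∏ i, |(t • ζ) i| ^ a i = t ^ (∑ i, a i) * ∏ i, |ζ i| ^ a i := by
    rw [Real.rpow_sum_of_pos ht, ← Finset.prod_mul_distrib]
    refine Finset.prod_congr rfl fun i _ => ?_
    rw [PiLp.smul_apply, smul_eq_mul, abs_mul, abs_of_pos ht, Real.mul_rpow ht.le (abs_nonneg _)]
  have hpow : t ^ (2 - ∑ i, a i) * t ^ ∑ i, a i = t ^ 2 := by
    rw [← Real.rpow_add ht, sub_add_cancel, Real.rpow_two]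
  rw [hnorm, hprod, mul_comm t ‖ζ‖, ← div_div, div_pow, div_pow]
  field_simp
  rw [← hpow]
  ring

theorem integral_sin_mul_norm_div_norm_sq_mul_prod (a : ι → ℝ) {t : ℝ} (ht : 0 < t) :
    ∫ ζ : EuclideanSpace ℝ ι, (Real.sin (t * ‖ζ‖) / ‖ζ‖) ^ 2 * ∏ i, |ζ i| ^ a i
      = t ^ (2 - Fintype.card ι - ∑ i, a i)
          * ∫ η : EuclideanSpace ℝ ι, (Real.sin ‖η‖ / ‖η‖) ^ 2 * ∏ i, |η i| ^ a i := by
  simp_rw [sin_mul_norm_div_norm_sq_mul_prod_eq a ht]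
  rw [integral_const_mul, Measure.integral_comp_smul volume
      (fun η : EuclideanSpace ℝ ι => (Real.sin ‖η‖ / ‖η‖) ^ 2 * ∏ i, |η i| ^ a i),
    finrank_euclideanSpace, smul_eq_mul, abs_of_pos (by positivity), ← mul_assoc,
    ← Real.rpow_natCast, ← Real.rpow_neg ht.le, ← Real.rpow_add ht]
  ring_nf

theorem stmt19_general (d : ℕ) (H : Fin d → ℝ)
    (hH : ∀ i, 1 / 2 < H i ∧ H i < 1) (hsum : (d : ℝ) - 1 < ∑ i, H i) :
    Integrable (fun η : EuclideanSpace ℝ (Fin d) =>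
        (Real.sin ‖η‖ / ‖η‖) ^ 2 * ∏ i, |η i| ^ (1 - 2 * H i))
      ∧ (∀ t : ℝ, 0 < t →
          (∫ ζ : EuclideanSpace ℝ (Fin d),
              (Real.sin (t * ‖ζ‖) / ‖ζ‖) ^ 2 * ∏ i, |ζ i| ^ (1 - 2 * H i))
            = t ^ (2 * ((∑ i, H i) - ((d : ℝ) - 1)))
                * ∫ η : EuclideanSpace ℝ (Fin d),
                    (Real.sin ‖η‖ / ‖η‖) ^ 2 * ∏ i, |η i| ^ (1 - 2 * H i))
      ∧ ∀ T : ℝ, 0 < T → ∃ C > 0, ∀ t : ℝ, 0 < t → t ≤ T →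
          (∫ ζ : EuclideanSpace ℝ (Fin d),
              (Real.sin (t * ‖ζ‖) / ‖ζ‖) ^ 2 * ∏ i, |ζ i| ^ (1 - 2 * H i))
            ≤ C * t ^ (2 * ((∑ i, H i) - ((d : ℝ) - 1))) := by
  have hsum' : ∑ i, (1 + (1 - 2 * H i)) / 2 < 1 := by
    simp only [show ∀ i, (1 + (1 - 2 * H i)) / 2 = 1 - H i from fun i => by ring,
      Finset.sum_sub_distrib, Finset.sum_const, Finset.card_univ, Fintype.card_fin, nsmul_one]
    linarith
  have hexp : 2 - (Fintype.card (Fin d) : ℝ) - ∑ i, (1 - 2 * H i)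
      = 2 * ((∑ i, H i) - ((d : ℝ) - 1)) := by
    simp only [Finset.sum_sub_distrib, ← Finset.mul_sum, Finset.sum_const, Finset.card_univ,
      Fintype.card_fin, nsmul_one]
    ring
  have hscale := fun t (ht : 0 < t) =>
    integral_sin_mul_norm_div_norm_sq_mul_prod (fun i => 1 - 2 * H i) ht
  simp only [hexp] at hscale
  set J := ∫ η : EuclideanSpace ℝ (Fin d), (Real.sin ‖η‖ / ‖η‖) ^ 2 * ∏ i, |η i| ^ (1 - 2 * H i)
  have hJ : 0 ≤ J := integral_nonneg fun η => by positivity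
  refine ⟨integrable_sin_norm_div_norm_sq_mul_prod_abs_rpow
      (fun i => ⟨by linarith [(hH i).2], by linarith [(hH i).1]⟩) hsum', hscale,
    fun T _ => ⟨J + 1, by positivity, fun t ht _ => ?_⟩⟩
  rw [hscale t ht, mul_comm]
  gcongr
  linarith

/-- hypothesis (h3) for fractional kernels. For `d ∈ {2,3}`,
`1/2 < Hᵢ < 1` with `κ̄ = ∑ᵢ Hᵢ - (d-1) > 0`:
`J_H = ∫ (sin|η|/|η|)² ∏ᵢ |ηᵢ|^{1-2Hᵢ} dη < ∞`, the spectral integral of the squared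
wave Fourier transform scales as `t^{2κ̄}·J_H`, and in particular it is bounded by
`C·t^{2κ̄}` on every `(0,T]`. -/
theorem stmt19 (d : ℕ) (hd : d = 2 ∨ d = 3) (H : Fin d → ℝ)
    (hH : ∀ i, 1 / 2 < H i ∧ H i < 1) (hsum : (d : ℝ) - 1 < ∑ i, H i) :
    Integrable (fun η : EuclideanSpace ℝ (Fin d) =>
        (Real.sin ‖η‖ / ‖η‖) ^ 2 * ∏ i, |η i| ^ (1 - 2 * H i))
      ∧ (∀ t : ℝ, 0 < t →
          (∫ ζ : EuclideanSpace ℝ (Fin d),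
              (Real.sin (t * ‖ζ‖) / ‖ζ‖) ^ 2 * ∏ i, |ζ i| ^ (1 - 2 * H i))
            = t ^ (2 * ((∑ i, H i) - ((d : ℝ) - 1)))
                * ∫ η : EuclideanSpace ℝ (Fin d),
                    (Real.sin ‖η‖ / ‖η‖) ^ 2 * ∏ i, |η i| ^ (1 - 2 * H i))
      ∧ ∀ T : ℝ, 0 < T → ∃ C > 0, ∀ t : ℝ, 0 < t → t ≤ T →
          (∫ ζ : EuclideanSpace ℝ (Fin d),
              (Real.sin (t * ‖ζ‖) / ‖ζ‖) ^ 2 * ∏ i, |ζ i| ^ (1 - 2 * H i))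
            ≤ C * t ^ (2 * ((∑ i, H i) - ((d : ℝ) - 1))) :=
  stmt19_general d H hH hsum
end
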